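/- arXiv:math/0407432 — 2 statements merged into one kernel-verified Lean document; each statement's English description precedes it below -/
import Mathlib

section
/- Let y₁, y₂ be real solutions of y'' = 6y² − x intersecting at a point x₀ ≤ 0 with y₁(x₀) = y₂(x₀) and y'₁(x₀) < y'₂(x₀) ≤ 0. Denote by a₁, a₂ the left endpoints of their intervals of existence. Then a₂ < a₁, and for all x ∈ (a₁, x₀): y₁(x) > y₂(x) and y'₁(x) < y'₂(x) < 0. -/
/-!
For `x ≤ 0` the equation forces `y'' > 0`, so slopes increase and are negative left of `x₀`, and
the energy `E = y'² - 4y³` satisfies `E' = -2xy'`. The gap `ΔE = E₁ - E₂` is positive at `x₀` and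
does not decrease leftwards while `y₁' < y₂'`; at a last point `b < x₀` with `y₂'(b) ≤ y₁'(b)` we
would have `y₁(b) > y₂(b)`, hence `ΔE(b) < 0`. So `y₂ < y₁` and `y₁' < y₂'` on the common interval,
and `a₁ < a₂` is impossible because `y₁ ≥ y₂` would then blow up inside the domain of `y₁`.

A common left endpoint `a` is excluded quantitatively. Monotonicity of `E` and of `E + 2ay` gives
`y'² ~ 4y³` near `a`, hence `y ~ (x - a)⁻²` (compare `1/√y` with `x - a`). With this, `ΔE ≥ 0`
yields `5(y₁ - y₂) ≤ 2(y₂' - y₁')(x - a)`, so `(y₁ - y₂)²(x - a)⁵` is positive and nonincreasing,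
whereas `y₁ - y₂ ≤ y₁ = O((x - a)⁻²)` makes it tend to `0` at `a`.
-/

open Filter Set Topology

section Monotonicity

variable {D : Set ℝ} {f f' : ℝ → ℝ}

lemma strictMonoOn_of_hasDerivAt_pos (hD : Convex ℝ D) (hf : ∀ x ∈ D, HasDerivAt f (f' x) x)
    (hf' : ∀ x ∈ interior D, 0 < f' x) : StrictMonoOn f D :=
  strictMonoOn_of_hasDerivWithinAt_pos hD (fun x hx ↦ (hf x hx).continuousAt.continuousWithinAt)
    (fun x hx ↦ (hf x (interior_subset hx)).hasDerivWithinAt) hf'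

lemma strictAntiOn_of_hasDerivAt_neg (hD : Convex ℝ D) (hf : ∀ x ∈ D, HasDerivAt f (f' x) x)
    (hf' : ∀ x ∈ interior D, f' x < 0) : StrictAntiOn f D :=
  strictAntiOn_of_hasDerivWithinAt_neg hD (fun x hx ↦ (hf x hx).continuousAt.continuousWithinAt)
    (fun x hx ↦ (hf x (interior_subset hx)).hasDerivWithinAt) hf'

lemma monotoneOn_of_hasDerivAt_nonneg (hD : Convex ℝ D) (hf : ∀ x ∈ D, HasDerivAt f (f' x) x)
    (hf' : ∀ x ∈ interior D, 0 ≤ f' x) : MonotoneOn f D :=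
  monotoneOn_of_hasDerivWithinAt_nonneg hD (fun x hx ↦ (hf x hx).continuousAt.continuousWithinAt)
    (fun x hx ↦ (hf x (interior_subset hx)).hasDerivWithinAt) hf'

lemma antitoneOn_of_hasDerivAt_nonpos (hD : Convex ℝ D) (hf : ∀ x ∈ D, HasDerivAt f (f' x) x)
    (hf' : ∀ x ∈ interior D, f' x ≤ 0) : AntitoneOn f D :=
  antitoneOn_of_hasDerivWithinAt_nonpos hD (fun x hx ↦ (hf x hx).continuousAt.continuousWithinAt)
    (fun x hx ↦ (hf x (interior_subset hx)).hasDerivWithinAt) hf'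

variable {a b L x : ℝ}

lemma MonotoneOn.le_of_tendsto_nhdsGT (hf : MonotoneOn f (Ioc a b))
    (hL : Tendsto f (𝓝[>] a) (𝓝 L)) (hx : x ∈ Ioc a b) : L ≤ f x :=
  le_of_tendsto hL <| by
    filter_upwards [Ioo_mem_nhdsGT hx.1] with t ht
    exact hf ⟨ht.1, ht.2.le.trans hx.2⟩ hx ht.2.le

lemma AntitoneOn.le_of_tendsto_nhdsGT (hf : AntitoneOn f (Ioc a b))
    (hL : Tendsto f (𝓝[>] a) (𝓝 L)) (hx : x ∈ Ioc a b) : f x ≤ L :=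
  neg_le_neg_iff.1 <| hf.neg.le_of_tendsto_nhdsGT hL.neg hx

end Monotonicity

lemma exists_mem_Icc_forall_pos_of_nonpos {f : ℝ → ℝ} {c d : ℝ} (hcd : c ≤ d)
    (hf : ContinuousOn f (Icc c d)) (hc : f c ≤ 0) :
    ∃ b ∈ Icc c d, f b ≤ 0 ∧ ∀ t ∈ Ioc b d, 0 < f t := by
  set S := Icc c d ∩ f ⁻¹' Iic 0
  have hS : IsCompact S :=
    isCompact_Icc.of_isClosed_subset (hf.preimage_isClosed_of_isClosed isClosed_Icc isClosed_Iic)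
      inter_subset_left
  obtain ⟨hbI, hb⟩ := hS.sSup_mem ⟨c, ⟨left_mem_Icc.2 hcd, hc⟩⟩
  refine ⟨sSup S, hbI, hb, fun t ht ↦ lt_of_not_ge fun hft ↦ ?_⟩
  exact ht.1.not_ge (le_csSup hS.bddAbove ⟨⟨hbI.1.trans ht.1.le, ht.2⟩, hft⟩)

lemma lt_of_hasDerivAt_lt {f g f' g' : ℝ → ℝ} {c d : ℝ} (hcd : c < d)
    (hf : ∀ x ∈ Icc c d, HasDerivAt f (f' x) x) (hg : ∀ x ∈ Icc c d, HasDerivAt g (g' x) x)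
    (hfg : ∀ x ∈ Ioo c d, f' x < g' x) (hd : f d = g d) : g c < f c := by
  have := strictAntiOn_of_hasDerivAt_neg (convex_Icc c d) (fun x hx ↦ (hf x hx).sub (hg x hx))
    (by simpa only [interior_Icc, sub_neg] using hfg)
    (left_mem_Icc.2 hcd.le) (right_mem_Icc.2 hcd.le) hcd
  simpa only [Pi.sub_apply, hd, sub_self, sub_pos] using this

lemma mul_sub_le_of_le_deriv {u u' : ℝ → ℝ} {a b k x : ℝ}
    (hu : ∀ x ∈ Ioc a b, HasDerivAt u (u' x) x) (hk : ∀ x ∈ Ioc a b, k ≤ u' x)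
    (h0 : Tendsto u (𝓝[>] a) (𝓝 0)) (hx : x ∈ Ioc a b) : k * (x - a) ≤ u x := by
  have hmono : MonotoneOn (fun t ↦ u t - k * t) (Ioc a b) :=
    monotoneOn_of_hasDerivAt_nonneg (convex_Ioc a b)
      (fun t ht ↦ (hu t ht).sub ((hasDerivAt_id t).const_mul k))
      (fun t ht ↦ by rw [interior_Ioc] at ht; simpa using hk t (Ioo_subset_Ioc_self ht))
  have hlim : Tendsto (fun t ↦ u t - k * t) (𝓝[>] a) (𝓝 (0 - k * a)) :=
    h0.sub (((continuous_const.mul continuous_id).tendsto a).mono_left nhdsWithin_le_nhds)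
  linarith [hmono.le_of_tendsto_nhdsGT hlim hx]

lemma le_mul_sub_of_deriv_le {u u' : ℝ → ℝ} {a b k x : ℝ}
    (hu : ∀ x ∈ Ioc a b, HasDerivAt u (u' x) x) (hk : ∀ x ∈ Ioc a b, u' x ≤ k)
    (h0 : Tendsto u (𝓝[>] a) (𝓝 0)) (hx : x ∈ Ioc a b) : u x ≤ k * (x - a) := by
  have := mul_sub_le_of_le_deriv (u := fun t ↦ -u t) (fun t ht ↦ (hu t ht).neg)
    (fun t ht ↦ neg_le_neg (hk t ht)) (by simpa using h0.neg) hx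
  linarith

lemma hasDerivAt_inv_sqrt {y : ℝ → ℝ} {d x : ℝ} (hy : 0 < y x) (hd : HasDerivAt y d x) :
    HasDerivAt (fun t ↦ (√(y t))⁻¹) (-d / (2 * y x * √(y x))) x := by
  have hσ : 0 < √(y x) := Real.sqrt_pos.2 hy
  refine (((Real.hasDerivAt_sqrt hy.ne').comp x hd).inv hσ.ne').congr_deriv ?_
  rw [Function.comp_apply, Real.sq_sqrt hy.le]
  field_simp

section BlowUpRate

variable {y y' : ℝ → ℝ} {a b k x : ℝ}

lemma mul_sq_le_one_of_sq_le_sq_deriv (hy : ∀ x ∈ Ioc a b, HasDerivAt y (y' x) x)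
    (hpos : ∀ x ∈ Ioc a b, 0 < y x) (hy' : ∀ x ∈ Ioc a b, y' x ≤ 0) (hk : 0 ≤ k)
    (hbound : ∀ x ∈ Ioc a b, 4 * k ^ 2 * y x ^ 3 ≤ y' x ^ 2)
    (hblow : Tendsto y (𝓝[>] a) atTop) (hx : x ∈ Ioc a b) :
    y x * (k * (x - a)) ^ 2 ≤ 1 := by
  have hderiv : ∀ t ∈ Ioc a b, k ≤ -y' t / (2 * y t * √(y t)) := by
    intro t ht
    have hyt := hpos t ht
    have hσ : 0 < √(y t) := Real.sqrt_pos.2 hyt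
    have hsq : (k * (2 * y t * √(y t))) ^ 2 ≤ (-y' t) ^ 2 := by
      linear_combination (4 * k ^ 2 * y t ^ 2) * Real.sq_sqrt (hpos t ht).le + hbound t ht
    rw [le_div_iff₀ (by positivity)]
    exact (le_abs_self _).trans (abs_le_of_sq_le_sq hsq (by linarith [hy' t ht]))
  have hle := mul_sub_le_of_le_deriv (fun t ht ↦ hasDerivAt_inv_sqrt (hpos t ht) (hy t ht))
    hderiv (Real.tendsto_sqrt_atTop.comp hblow).inv_tendsto_atTop hx
  calc y x * (k * (x - a)) ^ 2 ≤ y x * (√(y x))⁻¹ ^ 2 := by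
        gcongr
        · exact (hpos x hx).le
        · exact mul_nonneg hk (by linarith [hx.1])
    _ = 1 := by rw [inv_pow, Real.sq_sqrt (hpos x hx).le, mul_inv_cancel₀ (hpos x hx).ne']

lemma one_le_mul_sq_of_sq_deriv_le_sq (hy : ∀ x ∈ Ioc a b, HasDerivAt y (y' x) x)
    (hpos : ∀ x ∈ Ioc a b, 0 < y x) (hk : 0 ≤ k)
    (hbound : ∀ x ∈ Ioc a b, y' x ^ 2 ≤ 4 * k ^ 2 * y x ^ 3)
    (hblow : Tendsto y (𝓝[>] a) atTop) (hx : x ∈ Ioc a b) :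
    1 ≤ y x * (k * (x - a)) ^ 2 := by
  have hderiv : ∀ t ∈ Ioc a b, -y' t / (2 * y t * √(y t)) ≤ k := by
    intro t ht
    have hyt := hpos t ht
    have hσ : 0 < √(y t) := Real.sqrt_pos.2 hyt
    have hsq : (-y' t) ^ 2 ≤ (k * (2 * y t * √(y t))) ^ 2 := by
      linear_combination (-4 * k ^ 2 * y t ^ 2) * Real.sq_sqrt (hpos t ht).le + hbound t ht
    rw [div_le_iff₀ (by positivity)]
    exact (le_abs_self _).trans (abs_le_of_sq_le_sq hsq (by positivity))
  have hle := le_mul_sub_of_deriv_le (fun t ht ↦ hasDerivAt_inv_sqrt (hpos t ht) (hy t ht))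
    hderiv (Real.tendsto_sqrt_atTop.comp hblow).inv_tendsto_atTop hx
  calc 1 = y x * (√(y x))⁻¹ ^ 2 := by
        rw [inv_pow, Real.sq_sqrt (hpos x hx).le, mul_inv_cancel₀ (hpos x hx).ne']
    _ ≤ y x * (k * (x - a)) ^ 2 := by
        gcongr
        exact (hpos x hx).le

end BlowUpRate

lemma eventually_mul_add_le_mul_cube {d : ℝ} (hd : 0 < d) (b g : ℝ) :
    ∀ᶠ z in atTop, b * z + g ≤ d * z ^ 3 := by
  filter_upwards [eventually_ge_atTop (max 1 ((|b| + |g|) / d))] with z hz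
  have h1 : 1 ≤ z := le_of_max_le_left hz
  have h2 : |b| + |g| ≤ d * z := by
    have := le_of_max_le_right hz
    rwa [div_le_iff₀ hd, mul_comm] at this
  calc b * z + g ≤ (|b| + |g|) * z := by
        nlinarith [le_abs_self b, le_abs_self g, abs_nonneg g]
    _ ≤ d * z * z := by gcongr
    _ ≤ d * z * z * z := le_mul_of_one_le_right (by positivity) h1
    _ = d * z ^ 3 := by ring

/- Near a common pole `zᵢ ≈ s⁻²` and `pᵢ ≈ 2 zᵢ ^ (3/2)`, where the conclusion holds with `6` in
place of `5`; the margins `49/50` and `51/50` are tight enough to keep `5`. -/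
lemma five_mul_sub_le_of_cube_bounds {s z₁ z₂ p₁ p₂ : ℝ} (hs : 0 < s) (hz₂ : 0 < z₂)
    (hz : z₂ ≤ z₁) (hp₁ : 0 ≤ p₁) (hp₂ : 0 ≤ p₂)
    (hb₁ : p₁ ^ 2 ≤ 4 * (51 / 50) ^ 2 * z₁ ^ 3)
    (hE : 4 * (z₁ ^ 3 - z₂ ^ 3) ≤ p₁ ^ 2 - p₂ ^ 2)
    (hup : z₁ * (49 / 50 * s) ^ 2 ≤ 1) (hlo : 1 ≤ z₂ * (51 / 50 * s) ^ 2) :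
    5 * (z₁ - z₂) ≤ 2 * (p₁ - p₂) * s := by
  have hz₁ : 0 < z₁ := hz₂.trans_le hz
  have hsum : p₁ + p₂ ≤ 24 / 5 * z₂ ^ 2 * s := by
    have hsq : (p₁ + p₂) ^ 2 ≤ 16 * (51 / 50) ^ 2 * z₁ ^ 3 := by
      nlinarith [sq_nonneg (p₁ - p₂), pow_le_pow_left₀ hz₂.le hz 3]
    have hcube : (z₁ * (49 / 50 * s) ^ 2) ^ 3 ≤ 1 := pow_le_one₀ (by positivity) hup
    have hfourth : 1 ≤ (z₂ * (51 / 50 * s) ^ 2) ^ 4 := one_le_pow₀ hlo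
    rw [← pow_le_pow_iff_left₀ (by positivity) (by positivity) two_ne_zero,
      ← mul_le_mul_iff_left₀ (by positivity : (0 : ℝ) < s ^ 6)]
    calc (p₁ + p₂) ^ 2 * s ^ 6 ≤ 16 * (51 / 50) ^ 2 * z₁ ^ 3 * s ^ 6 := by gcongr
      _ = 16 * (51 / 50) ^ 2 * (50 / 49) ^ 6 * (z₁ * (49 / 50 * s) ^ 2) ^ 3 := by ring
      _ ≤ (24 / 5) ^ 2 * (50 / 51) ^ 8 * (z₂ * (51 / 50 * s) ^ 2) ^ 4 := by
        nlinarith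
      _ = (24 / 5 * z₂ ^ 2 * s) ^ 2 * s ^ 6 := by ring
  have hgap : 12 * (z₁ - z₂) * z₂ ^ 2 ≤ (p₁ - p₂) * (p₁ + p₂) := by
    nlinarith [mul_nonneg (sq_nonneg (z₁ - z₂)) (by positivity : 0 ≤ z₁ + 2 * z₂)]
  have hpd : 0 ≤ p₁ - p₂ := by nlinarith [pow_le_pow_left₀ hz₂.le hz 3]
  have : 12 * (z₁ - z₂) * z₂ ^ 2 ≤ 12 * (2 / 5 * (p₁ - p₂) * s) * z₂ ^ 2 := by
    nlinarith [mul_le_mul_of_nonneg_left hsum hpd]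
  linarith [le_of_mul_le_mul_right this (by positivity)]

lemma exists_lt_mul_sq_of_five_mul_le_deriv {w w' : ℝ → ℝ} {a b : ℝ} (hab : a < b)
    (hw : ∀ x ∈ Ioc a b, HasDerivAt w (w' x) x) (hpos : ∀ x ∈ Ioc a b, 0 < w x)
    (hdecay : ∀ x ∈ Ioc a b, 5 * w x ≤ -2 * w' x * (x - a)) (C : ℝ) :
    ∃ x ∈ Ioc a b, C < w x * (x - a) ^ 2 := by
  by_contra! hC
  set f : ℝ → ℝ := fun x ↦ w x ^ 2 * (x - a) ^ 5
  have hanti : AntitoneOn f (Ioc a b) := by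
    refine antitoneOn_of_hasDerivAt_nonpos (f' := fun x ↦
        w x * (x - a) ^ 4 * (2 * w' x * (x - a) + 5 * w x)) (convex_Ioc a b)
      (fun x hx ↦ (((hw x hx).pow 2).mul (((hasDerivAt_id x).sub_const a).pow 5)).congr_deriv
        (by simp only [Pi.pow_apply, id]; push_cast; ring)) (fun x hx ↦ ?_)
    rw [interior_Ioc] at hx
    have hx' := Ioo_subset_Ioc_self hx
    exact mul_nonpos_of_nonneg_of_nonpos (by have := hpos x hx'; positivity)
      (by linarith [hdecay x hx'])
  have hlim : Tendsto f (𝓝[>] a) (𝓝 0) := by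
    have hlin : Tendsto (fun x ↦ C ^ 2 * (x - a)) (𝓝[>] a) (𝓝 0) :=
      ((by fun_prop : Continuous fun x ↦ C ^ 2 * (x - a)).tendsto' a 0
        (by simp)).mono_left nhdsWithin_le_nhds
    refine tendsto_of_tendsto_of_tendsto_of_le_of_le' tendsto_const_nhds hlin ?_ ?_
    · filter_upwards [self_mem_nhdsWithin] with x hx
      have : 0 < x - a := sub_pos.2 hx
      positivity
    · filter_upwards [Ioc_mem_nhdsGT hab] with x hx
      have hs : 0 < x - a := sub_pos.2 hx.1
      calc f x = (w x * (x - a) ^ 2) ^ 2 * (x - a) := by ring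
        _ ≤ C ^ 2 * (x - a) := by
          gcongr
          · exact mul_nonneg (hpos x hx).le (sq_nonneg _)
          · exact hC x hx
  have hfb : 0 < f b := by
    have := hpos b ⟨hab, le_rfl⟩
    have : 0 < b - a := sub_pos.2 hab
    positivity
  linarith [hanti.le_of_tendsto_nhdsGT hlim ⟨hab, le_rfl⟩]

namespace PainleveI

def IsSolOn (y y' : ℝ → ℝ) (s : Set ℝ) : Prop :=
  ∀ x ∈ s, HasDerivAt y (y' x) x ∧ HasDerivAt y' (6 * y x ^ 2 - x) x

def energy (y y' : ℝ → ℝ) (x : ℝ) : ℝ := y' x ^ 2 - 4 * y x ^ 3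

variable {y y' y₁ y₁' y₂ y₂' : ℝ → ℝ} {s t : Set ℝ} {a b c d x x₀ : ℝ}

lemma IsSolOn.mono (h : IsSolOn y y' s) (hts : t ⊆ s) : IsSolOn y y' t :=
  fun x hx ↦ h x (hts hx)

lemma IsSolOn.hasDerivAt_energy (h : IsSolOn y y' s) (hx : x ∈ s) :
    HasDerivAt (energy y y') (-2 * x * y' x) x := by
  obtain ⟨hy, hy'⟩ := h x hx
  refine ((hy'.pow 2).sub ((hy.pow 3).const_mul 4)).congr_deriv ?_
  push_cast
  ring

lemma IsSolOn.deriv_lt (h : IsSolOn y y' (Ioc a b)) (hb : b ≤ 0) (hx : x ∈ Ioo a b) :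
    y' x < y' b :=
  strictMonoOn_of_hasDerivAt_pos (convex_Ioc a b) (fun t ht ↦ (h t ht).2)
    (fun t ht ↦ by rw [interior_Ioc] at ht; nlinarith [sq_nonneg (y t), ht.2])
    (Ioo_subset_Ioc_self hx) ⟨hx.1.trans hx.2, le_rfl⟩ hx.2

lemma IsSolOn.deriv_neg (h : IsSolOn y y' (Ioc a b)) (hb : b ≤ 0) (hb' : y' b ≤ 0)
    (hx : x ∈ Ioo a b) : y' x < 0 :=
  (h.deriv_lt hb hx).trans_le hb'

lemma IsSolOn.energy_le (h : IsSolOn y y' (Ioc a b)) (hb : b ≤ 0) (hb' : y' b ≤ 0)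
    (hx : x ∈ Ioc a b) : energy y y' b ≤ energy y y' x :=
  antitoneOn_of_hasDerivAt_nonpos (convex_Ioc a b) (fun t ht ↦ h.hasDerivAt_energy ht)
    (fun t ht ↦ by
      rw [interior_Ioc] at ht
      nlinarith [h.deriv_neg hb hb' ht, ht.2])
    hx ⟨hx.1.trans_le hx.2, le_rfl⟩ hx.2

lemma IsSolOn.energy_add_le (h : IsSolOn y y' (Ioc a b)) (hb : b ≤ 0) (hb' : y' b ≤ 0)
    (hx : x ∈ Ioc a b) : energy y y' x + 2 * a * y x ≤ energy y y' b + 2 * a * y b :=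
  monotoneOn_of_hasDerivAt_nonneg (f := fun t ↦ energy y y' t + 2 * a * y t) (convex_Ioc a b)
    (fun t ht ↦ (h.hasDerivAt_energy ht).add ((h t ht).1.const_mul (2 * a)))
    (fun t ht ↦ by
      rw [interior_Ioc] at ht
      nlinarith [h.deriv_neg hb hb' ht, ht.1])
    hx ⟨hx.1.trans_le hx.2, le_rfl⟩ hx.2

lemma IsSolOn.eventually_blowup_bounds (h : IsSolOn y y' (Ioc a b)) (hab : a < b)
    (hb : b ≤ 0) (hb' : y' b ≤ 0) (hblow : Tendsto y (𝓝[>] a) atTop) {k₁ k₂ : ℝ}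
    (hk₁ : 0 ≤ k₁) (hk₁' : k₁ < 1) (hk₂ : 1 < k₂) :
    ∀ᶠ x in 𝓝[>] a, y x * (k₁ * (x - a)) ^ 2 ≤ 1 ∧ 1 ≤ y x * (k₂ * (x - a)) ^ 2 ∧
      y' x ^ 2 ≤ 4 * k₂ ^ 2 * y x ^ 3 := by
  have hlo := eventually_mul_add_le_mul_cube (d := 4 - 4 * k₁ ^ 2) (by nlinarith) 0
    (-energy y y' b)
  have hhi := eventually_mul_add_le_mul_cube (d := 4 * k₂ ^ 2 - 4) (by nlinarith) (-2 * a)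
    (energy y y' b + 2 * a * y b)
  have hev : ∀ᶠ x in 𝓝[>] a, x ∈ Ioo a b ∧ 0 < y x ∧
      4 * k₁ ^ 2 * y x ^ 3 ≤ y' x ^ 2 ∧ y' x ^ 2 ≤ 4 * k₂ ^ 2 * y x ^ 3 := by
    filter_upwards [Ioo_mem_nhdsGT hab, hblow.eventually_gt_atTop 0, hblow.eventually hlo,
      hblow.eventually hhi] with x hx hpos hl hh
    have hE := h.energy_le hb hb' (Ioo_subset_Ioc_self hx)
    have hG := h.energy_add_le hb hb' (Ioo_subset_Ioc_self hx)
    unfold energy at hE hG hl hh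
    exact ⟨hx, hpos, by linarith, by linarith⟩
  obtain ⟨x₁, hx₁, hsub⟩ := mem_nhdsGT_iff_exists_Ioc_subset.1 hev
  have hy : ∀ t ∈ Ioc a x₁, HasDerivAt y (y' t) t :=
    fun t ht ↦ (h t ⟨(hsub ht).1.1, (hsub ht).1.2.le⟩).1
  filter_upwards [Ioc_mem_nhdsGT hx₁] with x hx
  exact ⟨mul_sq_le_one_of_sq_le_sq_deriv hy (fun t ht ↦ (hsub ht).2.1)
      (fun t ht ↦ (h.deriv_neg hb hb' (hsub ht).1).le) hk₁ (fun t ht ↦ (hsub ht).2.2.1) hblow hx,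
    one_le_mul_sq_of_sq_deriv_le_sq hy (fun t ht ↦ (hsub ht).2.1) (by linarith)
      (fun t ht ↦ (hsub ht).2.2.2) hblow hx,
    (hsub hx).2.2.2⟩

lemma IsSolOn.energy_sub_le (h₁ : IsSolOn y₁ y₁' (Icc c d)) (h₂ : IsSolOn y₂ y₂' (Icc c d))
    (hcd : c ≤ d) (hd : d ≤ 0) (hslope : ∀ x ∈ Ioo c d, y₁' x ≤ y₂' x) :
    energy y₁ y₁' d - energy y₂ y₂' d ≤ energy y₁ y₁' c - energy y₂ y₂' c :=
  antitoneOn_of_hasDerivAt_nonpos (f := fun x ↦ energy y₁ y₁' x - energy y₂ y₂' x)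
    (convex_Icc c d) (fun t ht ↦ (h₁.hasDerivAt_energy ht).sub (h₂.hasDerivAt_energy ht))
    (fun t ht ↦ by
      rw [interior_Icc] at ht
      nlinarith [hslope t ht, ht.2])
    (left_mem_Icc.2 hcd) (right_mem_Icc.2 hcd) hcd

lemma energy_sub_pos (heq : y₁ x₀ = y₂ x₀) (hs : y₁' x₀ < y₂' x₀) (hs2 : y₂' x₀ ≤ 0) :
    0 < energy y₁ y₁' x₀ - energy y₂ y₂' x₀ := by
  unfold energy
  rw [heq]
  nlinarith

lemma IsSolOn.deriv_lt_deriv_of_crossing {m : ℝ} (h₁ : IsSolOn y₁ y₁' (Ioc m x₀))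
    (h₂ : IsSolOn y₂ y₂' (Ioc m x₀)) (hx₀ : x₀ ≤ 0) (heq : y₁ x₀ = y₂ x₀)
    (hs : y₁' x₀ < y₂' x₀) (hs2 : y₂' x₀ ≤ 0) (hx : x ∈ Ioc m x₀) : y₁' x < y₂' x := by
  by_contra! hx'
  have hsub : ∀ {c}, c ∈ Icc x x₀ → Icc c x₀ ⊆ Ioc m x₀ :=
    fun hc t ht ↦ ⟨hx.1.trans_le (hc.1.trans ht.1), ht.2⟩
  obtain ⟨b, hb, hb', hafter⟩ := exists_mem_Icc_forall_pos_of_nonpos (f := y₂' - y₁') hx.2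
    (fun t ht ↦ ((h₂ t (hsub (left_mem_Icc.2 hx.2) ht)).2.continuousAt.sub
      (h₁ t (hsub (left_mem_Icc.2 hx.2) ht)).2.continuousAt).continuousWithinAt)
    (sub_nonpos.2 hx')
  simp only [Pi.sub_apply, sub_nonpos, sub_pos] at hb' hafter
  have hbx₀ : b < x₀ := hb.2.lt_of_ne (by rintro rfl; linarith)
  have hafter' : ∀ t ∈ Ioo b x₀, y₁' t < y₂' t := fun t ht ↦ hafter t (Ioo_subset_Ioc_self ht)
  have hw : y₂ b < y₁ b := lt_of_hasDerivAt_lt hbx₀ (fun t ht ↦ (h₁ t (hsub hb ht)).1)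
    (fun t ht ↦ (h₂ t (hsub hb ht)).1) hafter' heq
  have hE := (h₁.mono (hsub hb)).energy_sub_le (h₂.mono (hsub hb)) hbx₀.le hx₀
    (fun t ht ↦ (hafter' t ht).le)
  have hE₀ := energy_sub_pos heq hs hs2
  have hneg : y₁' b < 0 := h₁.deriv_neg hx₀ (hs.le.trans hs2) ⟨hx.1.trans_le hb.1, hbx₀⟩
  have hcube : y₂ b ^ 3 < y₁ b ^ 3 := Odd.strictMono_pow (by decide) hw
  unfold energy at hE hE₀
  nlinarith [mul_nonneg (sub_nonneg.2 hb') (by linarith : 0 ≤ -(y₁' b + y₂' b))]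

lemma IsSolOn.lt_of_crossing {m : ℝ} (h₁ : IsSolOn y₁ y₁' (Ioc m x₀))
    (h₂ : IsSolOn y₂ y₂' (Ioc m x₀)) (hx₀ : x₀ ≤ 0) (heq : y₁ x₀ = y₂ x₀)
    (hs : y₁' x₀ < y₂' x₀) (hs2 : y₂' x₀ ≤ 0) (hx : x ∈ Ioo m x₀) : y₂ x < y₁ x :=
  lt_of_hasDerivAt_lt hx.2 (fun _ ht ↦ (h₁ _ ⟨hx.1.trans_le ht.1, ht.2⟩).1)
    (fun _ ht ↦ (h₂ _ ⟨hx.1.trans_le ht.1, ht.2⟩).1)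
    (fun _ ht ↦ h₁.deriv_lt_deriv_of_crossing h₂ hx₀ heq hs hs2 ⟨hx.1.trans ht.1, ht.2.le⟩) heq

lemma IsSolOn.tendsto_atTop_of_crossing {m : ℝ} (h₁ : IsSolOn y₁ y₁' (Ioc m x₀))
    (h₂ : IsSolOn y₂ y₂' (Ioc m x₀)) (hx₀ : x₀ ≤ 0) (heq : y₁ x₀ = y₂ x₀)
    (hs : y₁' x₀ < y₂' x₀) (hs2 : y₂' x₀ ≤ 0) (hm : m < x₀)
    (hblow₂ : Tendsto y₂ (𝓝[>] m) atTop) : Tendsto y₁ (𝓝[>] m) atTop :=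
  tendsto_atTop_mono' _ (by
    filter_upwards [Ioo_mem_nhdsGT hm] with x hx
    exact (h₁.lt_of_crossing h₂ hx₀ heq hs hs2 hx).le) hblow₂

lemma IsSolOn.not_tendsto_atTop_of_crossing (h₁ : IsSolOn y₁ y₁' (Ioc a x₀))
    (h₂ : IsSolOn y₂ y₂' (Ioc a x₀)) (hx₀ : x₀ ≤ 0) (ha : a < x₀) (heq : y₁ x₀ = y₂ x₀)
    (hs : y₁' x₀ < y₂' x₀) (hs2 : y₂' x₀ ≤ 0) : ¬ Tendsto y₂ (𝓝[>] a) atTop := by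
  intro hblow₂
  have hlt : ∀ x ∈ Ioo a x₀, y₂ x < y₁ x := fun x hx ↦ h₁.lt_of_crossing h₂ hx₀ heq hs hs2 hx
  have hblow₁ := h₁.tendsto_atTop_of_crossing h₂ hx₀ heq hs hs2 ha hblow₂
  have hgap : ∀ x ∈ Ioo a x₀, 4 * (y₁ x ^ 3 - y₂ x ^ 3) ≤ (-y₁' x) ^ 2 - (-y₂' x) ^ 2 := by
    intro x hx
    have hsub : Icc x x₀ ⊆ Ioc a x₀ := fun t ht ↦ ⟨hx.1.trans_le ht.1, ht.2⟩
    have hE := (h₁.mono hsub).energy_sub_le (h₂.mono hsub) hx.2.le hx₀ fun t ht ↦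
      (h₁.deriv_lt_deriv_of_crossing h₂ hx₀ heq hs hs2 ⟨hx.1.trans ht.1, ht.2.le⟩).le
    have hE₀ := energy_sub_pos heq hs hs2
    unfold energy at hE hE₀
    linarith [neg_sq (y₁' x), neg_sq (y₂' x)]
  obtain ⟨x₁, hx₁, hsub⟩ := mem_nhdsGT_iff_exists_Ioc_subset.1 <|
    (h₁.eventually_blowup_bounds ha hx₀ (hs.le.trans hs2) hblow₁ (k₁ := 49 / 50) (k₂ := 51 / 50)
      (by norm_num) (by norm_num) (by norm_num)).and <|
    (h₂.eventually_blowup_bounds ha hx₀ hs2 hblow₂ (k₁ := 49 / 50) (k₂ := 51 / 50)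
      (by norm_num) (by norm_num) (by norm_num)).and <|
    (eventually_mem_set.2 (Ioo_mem_nhdsGT ha)).and (hblow₂.eventually_gt_atTop 0)
  have hx : ∀ x ∈ Ioc a x₁, x ∈ Ioo a x₀ := fun x hx ↦ (hsub hx).2.2.1
  obtain ⟨x, hx', hbig⟩ := exists_lt_mul_sq_of_five_mul_le_deriv (w := y₁ - y₂) hx₁
    (fun x hx' ↦ (h₁ x (Ioo_subset_Ioc_self (hx x hx'))).1.sub
      (h₂ x (Ioo_subset_Ioc_self (hx x hx'))).1)
    (fun x hx' ↦ sub_pos.2 (hlt x (hx x hx')))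
    (fun x hx' ↦ by
      obtain ⟨⟨hup, -, hb₁⟩, ⟨-, hlo, -⟩, hxI, hpos⟩ := hsub hx'
      have := five_mul_sub_le_of_cube_bounds (sub_pos.2 hx'.1) hpos (hlt x hxI).le
        (neg_nonneg.2 (h₁.deriv_neg hx₀ (hs.le.trans hs2) hxI).le)
        (neg_nonneg.2 (h₂.deriv_neg hx₀ hs2 hxI).le) (by rwa [neg_sq]) (hgap x hxI) hup hlo
      simp only [Pi.sub_apply]
      linarith)
    ((50 / 49) ^ 2)
  obtain ⟨⟨hup, -⟩, -, hxI, hpos⟩ := hsub hx'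
  simp only [Pi.sub_apply] at hbig
  nlinarith [sq_nonneg (x - a)]

end PainleveI

theorem painleveI_left_comparison_general
    (a₁ a₂ x₀ : ℝ) (hx₀ : x₀ ≤ 0) (ha₂ : a₂ < x₀)
    (y₁ y₁' y₂ y₂' : ℝ → ℝ)
    (h₁ : ∀ x ∈ Set.Ioc a₁ x₀,
      HasDerivAt y₁ (y₁' x) x ∧ HasDerivAt y₁' (6 * (y₁ x) ^ 2 - x) x)
    (h₂ : ∀ x ∈ Set.Ioc a₂ x₀,
      HasDerivAt y₂ (y₂' x) x ∧ HasDerivAt y₂' (6 * (y₂ x) ^ 2 - x) x)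
    (hblow₂ : Tendsto y₂ (𝓝[>] a₂) atTop)
    (heq : y₁ x₀ = y₂ x₀)
    (hs : y₁' x₀ < y₂' x₀) (hs2 : y₂' x₀ ≤ 0) :
    a₂ < a₁ ∧
      ∀ x ∈ Set.Ioo a₁ x₀, y₂ x < y₁ x ∧ y₁' x < y₂' x ∧ y₂' x < 0 := by
  have hsol₁ : PainleveI.IsSolOn y₁ y₁' (Ioc a₁ x₀) := h₁
  have hsol₂ : PainleveI.IsSolOn y₂ y₂' (Ioc a₂ x₀) := h₂
  have hlt : a₂ < a₁ := by
    rcases lt_trichotomy a₁ a₂ with h | rfl | h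
    · exact absurd ((hsol₁.mono (Ioc_subset_Ioc_left h.le)).tendsto_atTop_of_crossing hsol₂ hx₀
        heq hs hs2 ha₂ hblow₂) (not_tendsto_atTop_of_tendsto_nhds
          ((h₁ a₂ ⟨h, ha₂.le⟩).1.continuousAt.tendsto.mono_left nhdsWithin_le_nhds))
    · exact absurd hblow₂ (hsol₁.not_tendsto_atTop_of_crossing hsol₂ hx₀ ha₂ heq hs hs2)
    · exact h
  have hsol₂' := hsol₂.mono (Ioc_subset_Ioc_left hlt.le)
  exact ⟨hlt, fun x hx ↦ ⟨hsol₁.lt_of_crossing hsol₂' hx₀ heq hs hs2 hx,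
    hsol₁.deriv_lt_deriv_of_crossing hsol₂' hx₀ heq hs hs2 (Ioo_subset_Ioc_self hx),
    hsol₂.deriv_neg hx₀ hs2 ⟨hlt.trans hx.1, hx.2⟩⟩⟩

/-- Comparison to the left for `y'' = 6y² - x`: if `y₁(x₀) = y₂(x₀)` with
`y₁'(x₀) < y₂'(x₀) ≤ 0` at `x₀ ≤ 0`, and `a₁, a₂` are the left blow-up points,
then `a₂ < a₁`, and `y₁ > y₂`, `y₁' < y₂' < 0` on `(a₁, x₀)`. -/
theorem painleveI_left_comparison
    (a₁ a₂ x₀ : ℝ) (hx₀ : x₀ ≤ 0) (ha₁ : a₁ < x₀) (ha₂ : a₂ < x₀)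
    (y₁ y₁' y₂ y₂' : ℝ → ℝ)
    (h₁ : ∀ x ∈ Set.Ioc a₁ x₀,
      HasDerivAt y₁ (y₁' x) x ∧ HasDerivAt y₁' (6 * (y₁ x) ^ 2 - x) x)
    (h₂ : ∀ x ∈ Set.Ioc a₂ x₀,
      HasDerivAt y₂ (y₂' x) x ∧ HasDerivAt y₂' (6 * (y₂ x) ^ 2 - x) x)
    (hblow₁ : Tendsto y₁ (𝓝[>] a₁) atTop)
    (hblow₂ : Tendsto y₂ (𝓝[>] a₂) atTop)
    (heq : y₁ x₀ = y₂ x₀)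
    (hs : y₁' x₀ < y₂' x₀) (hs2 : y₂' x₀ ≤ 0) :
    a₂ < a₁ ∧
      ∀ x ∈ Set.Ioo a₁ x₀, y₂ x < y₁ x ∧ y₁' x < y₂' x ∧ y₂' x < 0 :=
  painleveI_left_comparison_general a₁ a₂ x₀ hx₀ ha₂ y₁ y₁' y₂ y₂' h₁ h₂ hblow₂ heq hs hs2
end

section
/- (Moore–Nehari comparison for Painlevé I) Let y₁, y₂, y₃ be solutions of y'' = 6y² − x whose intervals of existence contain [α, β] ⊂ (−∞, 0]. If y₁(x) > y₃(x) and y₂(x) > y₃(x) for x ∈ (α, β), and y₁ ≥ y₃, y₂ ≥ y₃ at the endpoints α, β, then the graphs of y₁ and y₂ intersect at most once in [α, β]. -/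
/-!
With `w = y₁ - y₂` and `u = y₁ - y₃` the equation gives `w'' = 6 (y₁ + y₂) w` and
`u'' = 6 (y₁ + y₃) u`, and the first coefficient exceeds the second by `6 (y₂ - y₃) > 0`: this is
where convexity of `6y² - x` in `y` enters. By Sturm's comparison theorem `u` must vanish strictly
between two consecutive zeros of `w`, which the domination `y₁ > y₃` forbids. Hence two common
points of `y₁` and `y₂` force `w ≡ 0` between them, and uniqueness for the linear equation
satisfied by `w` spreads this to all of `[α, β]`.
-/

open Filter Set Topology

def IsPainleveISolutionOn (y y' : ℝ → ℝ) (s : Set ℝ) : Prop :=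
  ∀ x ∈ s, HasDerivAt y (y' x) x ∧ HasDerivAt y' (6 * y x ^ 2 - x) x

def IsLinearSecondOrderSolutionOn (w w' p : ℝ → ℝ) (s : Set ℝ) : Prop :=
  ∀ x ∈ s, HasDerivAt w (w' x) x ∧ HasDerivAt w' (p x * w x) x

theorem HasDerivAt.nonneg_of_eq_zero_of_nonneg_right {f : ℝ → ℝ} {d a b : ℝ} (hab : a < b)
    (hf : HasDerivAt f d a) (ha : f a = 0) (hnonneg : ∀ x ∈ Ioo a b, 0 ≤ f x) : 0 ≤ d := by
  refine ge_of_tendsto ((hasDerivAt_iff_tendsto_slope.mp hf).mono_left (nhdsGT_le_nhdsNE a)) ?_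
  filter_upwards [Ioo_mem_nhdsGT hab] with x hx
  rw [slope_def_field, ha, sub_zero]
  exact div_nonneg (hnonneg x hx) (sub_nonneg.2 hx.1.le)

theorem HasDerivAt.nonpos_of_eq_zero_of_nonneg_left {f : ℝ → ℝ} {d a b : ℝ} (hab : a < b)
    (hf : HasDerivAt f d b) (hb : f b = 0) (hnonneg : ∀ x ∈ Ioo a b, 0 ≤ f x) : d ≤ 0 := by
  refine le_of_tendsto ((hasDerivAt_iff_tendsto_slope.mp hf).mono_left (nhdsLT_le_nhdsNE b)) ?_
  filter_upwards [Ioo_mem_nhdsLT hab] with x hx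
  rw [slope_def_field, hb, sub_zero]
  exact div_nonpos_of_nonneg_of_nonpos (hnonneg x hx) (sub_nonpos.2 hx.2.le)

theorem ContinuousOn.exists_zeros_bracketing_pos {w : ℝ → ℝ} {s t c : ℝ}
    (hw : ContinuousOn w (Icc s t)) (hs : w s = 0) (ht : w t = 0) (hc : c ∈ Icc s t)
    (hwc : 0 < w c) :
    ∃ a b, s ≤ a ∧ a < b ∧ b ≤ t ∧ w a = 0 ∧ w b = 0 ∧ ∀ x ∈ Ioo a b, 0 < w x := by
  have hZ : IsClosed (Icc s t ∩ w ⁻¹' {0}) :=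
    hw.preimage_isClosed_of_isClosed isClosed_Icc isClosed_singleton
  set A := Icc s t ∩ w ⁻¹' {0} ∩ Iic c
  set B := Icc s t ∩ w ⁻¹' {0} ∩ Ici c
  have hA : BddAbove A := ⟨c, fun x hx => hx.2⟩
  have hB : BddBelow B := ⟨c, fun x hx => hx.2⟩
  have hst : s ≤ t := hc.1.trans hc.2
  have haA : sSup A ∈ A :=
    (hZ.inter isClosed_Iic).csSup_mem ⟨s, ⟨left_mem_Icc.2 hst, hs⟩, hc.1⟩ hA
  have hbB : sInf B ∈ B :=
    (hZ.inter isClosed_Ici).csInf_mem ⟨t, ⟨right_mem_Icc.2 hst, ht⟩, hc.2⟩ hB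
  have hac : sSup A < c := haA.2.lt_of_ne fun h => hwc.ne' (h ▸ haA.1.2)
  have hcb : c < sInf B := hbB.2.lt_of_ne' fun h => hwc.ne' (h ▸ hbB.1.2)
  have hne : ∀ x ∈ Ioo (sSup A) (sInf B), w x ≠ 0 := by
    intro x hx hx0
    have hxst : x ∈ Icc s t := ⟨haA.1.1.1.trans hx.1.le, hx.2.le.trans hbB.1.1.2⟩
    rcases le_total x c with hxc | hcx
    · exact hx.1.not_ge (le_csSup hA ⟨⟨hxst, hx0⟩, hxc⟩)
    · exact hx.2.not_ge (csInf_le hB ⟨⟨hxst, hx0⟩, hcx⟩)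
  refine ⟨sSup A, sInf B, haA.1.1.1, hac.trans hcb, hbB.1.1.2, haA.1.2, hbB.1.2, fun x hx => ?_⟩
  by_contra! hx0
  have hsub : uIcc x c ⊆ Ioo (sSup A) (sInf B) := ordConnected_Ioo.uIcc_subset hx ⟨hac, hcb⟩
  obtain ⟨z, hz, hz0⟩ := intermediate_value_uIcc
    (hw.mono (hsub.trans (Ioo_subset_Icc_self.trans (Icc_subset_Icc haA.1.1.1 hbB.1.1.2))))
    (mem_uIcc_of_le hx0 hwc.le)
  exact hne z (hsub hz) hz0

namespace IsLinearSecondOrderSolutionOn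

variable {w w' p : ℝ → ℝ}

theorem continuousOn {s : Set ℝ} (hw : IsLinearSecondOrderSolutionOn w w' p s) :
    ContinuousOn w s :=
  fun x hx => (hw x hx).1.continuousAt.continuousWithinAt

/-- Sturm comparison. `W = w' u - w u'` has derivative `(p - q) w u`, which is positive if `u > 0`,
while the signs of `w'` at the consecutive zeros `a`, `b` of `w` give `W a ≥ 0 ≥ W b`. -/
theorem exists_nonpos_of_comparison {u u' q : ℝ → ℝ} {a b : ℝ}
    (hw : IsLinearSecondOrderSolutionOn w w' p (Icc a b))
    (hu : IsLinearSecondOrderSolutionOn u u' q (Icc a b)) (hab : a < b)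
    (hqp : ∀ x ∈ Ioo a b, q x < p x) (hwa : w a = 0) (hwb : w b = 0)
    (hw_pos : ∀ x ∈ Ioo a b, 0 < w x) : ∃ x ∈ Ioo a b, u x ≤ 0 := by
  by_contra! hu_pos
  set W : ℝ → ℝ := fun x => w' x * u x - w x * u' x
  have hW : ∀ x ∈ Icc a b, HasDerivAt W ((p x - q x) * w x * u x) x := fun x hx =>
    ((((hw x hx).2.mul (hu x hx).1).sub ((hw x hx).1.mul (hu x hx).2))).congr_deriv (by ring)
  have hW_mono : StrictMonoOn W (Icc a b) := by
    refine strictMonoOn_of_deriv_pos (convex_Icc a b)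
      (fun x hx => (hW x hx).continuousAt.continuousWithinAt) fun x hx => ?_
    rw [interior_Icc] at hx
    rw [(hW x (Ioo_subset_Icc_self hx)).deriv]
    exact mul_pos (mul_pos (sub_pos.2 (hqp x hx)) (hw_pos x hx)) (hu_pos x hx)
  have hu_nonneg : ∀ x ∈ Icc a b, 0 ≤ u x := fun x hx =>
    le_on_closure (fun y hy => (hu_pos y hy).le) continuousOn_const
      (by rw [closure_Ioo hab.ne]; exact hu.continuousOn) (by rwa [closure_Ioo hab.ne])
  have hwa' : 0 ≤ w' a := (hw a (left_mem_Icc.2 hab.le)).1.nonneg_of_eq_zero_of_nonneg_right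
    hab hwa fun x hx => (hw_pos x hx).le
  have hwb' : w' b ≤ 0 := (hw b (right_mem_Icc.2 hab.le)).1.nonpos_of_eq_zero_of_nonneg_left
    hab hwb fun x hx => (hw_pos x hx).le
  have hWa : 0 ≤ W a := by
    simpa [W, hwa] using mul_nonneg hwa' (hu_nonneg a (left_mem_Icc.2 hab.le))
  have hWb : W b ≤ 0 := by
    simpa [W, hwb] using mul_nonpos_of_nonpos_of_nonneg hwb' (hu_nonneg b (right_mem_Icc.2 hab.le))
  exact (hWa.trans_lt (hW_mono (left_mem_Icc.2 hab.le) (right_mem_Icc.2 hab.le) hab)).not_ge hWb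

theorem eqOn_zero {α β t : ℝ} (hw : IsLinearSecondOrderSolutionOn w w' p (Icc α β))
    (hp : ContinuousOn p (Icc α β)) (ht : t ∈ Icc α β) (h0 : w t = 0) (h0' : w' t = 0) :
    EqOn w 0 (Icc α β) := by
  obtain ⟨C, hC⟩ := isCompact_Icc.exists_bound_of_continuousOn hp
  set v : ℝ → ℝ × ℝ → ℝ × ℝ := fun x z => (z.2, p x * z.1)
  have hv : ∀ x ∈ Icc α β, LipschitzWith (max 1 C.toNNReal) (v x) := fun x hx => by
    have hpx : ‖p x‖₊ * 1 ≤ C.toNNReal := by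
      rw [mul_one, ← NNReal.coe_le_coe, coe_nnnorm, Real.coe_toNNReal']
      exact le_max_of_le_left (hC x hx)
    exact (LipschitzWith.prod_snd.prodMk
      ((lipschitzWith_smul (p x)).comp LipschitzWith.prod_fst)).weaken (max_le_max le_rfl hpx)
  set F : ℝ → ℝ × ℝ := fun x => (w x, w' x)
  have hF : ∀ x ∈ Icc α β, HasDerivAt F (v x (F x)) x := fun x hx =>
    (hw x hx).1.prodMk (hw x hx).2
  have hzero : ∀ x, HasDerivAt (fun _ => (0 : ℝ × ℝ)) (v x 0) x := fun x =>
    (hasDerivAt_const x _).congr_deriv (by simp [v]; rfl)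
  have hFt : F t = 0 := by simp [F, h0, h0']
  have hright : EqOn F 0 (Icc t β) :=
    ODE_solution_unique_of_mem_Icc_right (s := fun _ => univ)
      (fun x hx => (hv x ⟨ht.1.trans hx.1, hx.2.le⟩).lipschitzOnWith)
      (fun x hx => (hF x ⟨ht.1.trans hx.1, hx.2⟩).continuousAt.continuousWithinAt)
      (fun x hx => (hF x ⟨ht.1.trans hx.1, hx.2.le⟩).hasDerivWithinAt) (fun _ _ => trivial)
      continuousOn_const (fun x _ => (hzero x).hasDerivWithinAt) (fun _ _ => trivial) hFt
  have hleft : EqOn F 0 (Icc α t) :=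
    ODE_solution_unique_of_mem_Icc_left (s := fun _ => univ)
      (fun x hx => (hv x ⟨hx.1.le, hx.2.trans ht.2⟩).lipschitzOnWith)
      (fun x hx => (hF x ⟨hx.1, hx.2.trans ht.2⟩).continuousAt.continuousWithinAt)
      (fun x hx => (hF x ⟨hx.1.le, hx.2.trans ht.2⟩).hasDerivWithinAt) (fun _ _ => trivial)
      continuousOn_const (fun x _ => (hzero x).hasDerivWithinAt) (fun _ _ => trivial) hFt
  intro x hx
  rcases le_total x t with hxt | htx
  · exact congrArg Prod.fst (hleft ⟨hx.1, hxt⟩)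
  · exact congrArg Prod.fst (hright ⟨htx, hx.2⟩)

theorem eqOn_zero_of_eqOn_Icc {α β s t : ℝ}
    (hw : IsLinearSecondOrderSolutionOn w w' p (Icc α β)) (hp : ContinuousOn p (Icc α β))
    (hst : s < t) (hsub : Icc s t ⊆ Icc α β)
    (h0 : EqOn w 0 (Icc s t)) : EqOn w 0 (Icc α β) := by
  have hs : s ∈ Icc s t := left_mem_Icc.2 hst.le
  have h0' : w' s = 0 :=
    (uniqueDiffOn_Icc hst s hs).eq_deriv _
      ((hw s (hsub hs)).1.hasDerivWithinAt.congr (fun z hz => (h0 hz).symm) (h0 hs).symm)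
      (hasDerivWithinAt_const _ _ _)
  exact hw.eqOn_zero hp (hsub hs) (h0 hs) h0'

end IsLinearSecondOrderSolutionOn

namespace IsPainleveISolutionOn

variable {y₁ y₁' y₂ y₂' y₃ y₃' : ℝ → ℝ} {s : Set ℝ}

theorem mono {t : Set ℝ} (h₁ : IsPainleveISolutionOn y₁ y₁' s) (hts : t ⊆ s) :
    IsPainleveISolutionOn y₁ y₁' t :=
  fun x hx => h₁ x (hts hx)

theorem continuousOn (h₁ : IsPainleveISolutionOn y₁ y₁' s) : ContinuousOn y₁ s :=
  fun x hx => (h₁ x hx).1.continuousAt.continuousWithinAt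

theorem sub (h₁ : IsPainleveISolutionOn y₁ y₁' s) (h₂ : IsPainleveISolutionOn y₂ y₂' s) :
    IsLinearSecondOrderSolutionOn (y₁ - y₂) (y₁' - y₂') (fun x => 6 * (y₁ x + y₂ x)) s :=
  fun x hx => ⟨(h₁ x hx).1.sub (h₂ x hx).1,
    ((h₁ x hx).2.sub (h₂ x hx).2).congr_deriv (by simp only [Pi.sub_apply]; ring)⟩

theorem eqOn_Icc_of_dominate {a b : ℝ} (h₁ : IsPainleveISolutionOn y₁ y₁' (Icc a b))
    (h₂ : IsPainleveISolutionOn y₂ y₂' (Icc a b)) (h₃ : IsPainleveISolutionOn y₃ y₃' (Icc a b))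
    (hdom : ∀ x ∈ Ioo a b, y₃ x < y₁ x ∧ y₃ x < y₂ x) (ha : y₁ a = y₂ a) (hb : y₁ b = y₂ b) :
    EqOn y₁ y₂ (Icc a b) := by
  intro c hc
  by_contra hne
  wlog hlt : y₂ c < y₁ c generalizing y₁ y₁' y₂ y₂'
  · exact this h₂ h₁ (fun x hx => (hdom x hx).symm) ha.symm hb.symm (Ne.symm hne)
      ((not_lt.1 hlt).lt_of_ne hne)
  obtain ⟨a', b', ha', hab', hb', hwa, hwb, hw_pos⟩ :=
    (h₁.continuousOn.sub h₂.continuousOn).exists_zeros_bracketing_pos (w := y₁ - y₂)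
      (sub_eq_zero.2 ha) (sub_eq_zero.2 hb) hc (sub_pos.2 hlt)
  have hsub : Icc a' b' ⊆ Icc a b := Icc_subset_Icc ha' hb'
  have hdom' : ∀ x ∈ Ioo a' b', y₃ x < y₁ x ∧ y₃ x < y₂ x :=
    fun x hx => hdom x (Ioo_subset_Ioo ha' hb' hx)
  obtain ⟨x, hx, hux⟩ := ((h₁.mono hsub).sub (h₂.mono hsub)).exists_nonpos_of_comparison
    ((h₁.mono hsub).sub (h₃.mono hsub)) hab' (fun x hx => by linarith [(hdom' x hx).2])
    hwa hwb hw_pos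
  exact hux.not_gt (sub_pos.2 (hdom' x hx).1)

end IsPainleveISolutionOn

theorem painleveI_moore_nehari_general
    (α β : ℝ)
    (y₁ y₁' y₂ y₂' y₃ y₃' : ℝ → ℝ)
    (h₁ : ∀ x ∈ Set.Icc α β,
      HasDerivAt y₁ (y₁' x) x ∧ HasDerivAt y₁' (6 * (y₁ x) ^ 2 - x) x)
    (h₂ : ∀ x ∈ Set.Icc α β,
      HasDerivAt y₂ (y₂' x) x ∧ HasDerivAt y₂' (6 * (y₂ x) ^ 2 - x) x)
    (h₃ : ∀ x ∈ Set.Icc α β,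
      HasDerivAt y₃ (y₃' x) x ∧ HasDerivAt y₃' (6 * (y₃ x) ^ 2 - x) x)
    (hdom : ∀ x ∈ Set.Ioo α β, y₃ x < y₁ x ∧ y₃ x < y₂ x)
    (hne : ∃ x ∈ Set.Icc α β, y₁ x ≠ y₂ x) :
    ∀ s ∈ Set.Icc α β, ∀ t ∈ Set.Icc α β,
      y₁ s = y₂ s → y₁ t = y₂ t → s = t := by
  replace h₁ : IsPainleveISolutionOn y₁ y₁' (Icc α β) := h₁
  replace h₂ : IsPainleveISolutionOn y₂ y₂' (Icc α β) := h₂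
  replace h₃ : IsPainleveISolutionOn y₃ y₃' (Icc α β) := h₃
  intro s hs t ht hs' ht'
  by_contra hst
  wlog hlt : s < t generalizing s t
  · exact this t ht s hs ht' hs' (Ne.symm hst) ((not_lt.1 hlt).lt_of_ne (Ne.symm hst))
  have hsub : Icc s t ⊆ Icc α β := Icc_subset_Icc hs.1 ht.2
  have heq : EqOn y₁ y₂ (Icc s t) :=
    (h₁.mono hsub).eqOn_Icc_of_dominate (h₂.mono hsub) (h₃.mono hsub)
      (fun x hx => hdom x (Ioo_subset_Ioo hs.1 ht.2 hx)) hs' ht'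
  have hp : ContinuousOn (fun x => 6 * (y₁ x + y₂ x)) (Icc α β) :=
    continuousOn_const.mul (h₁.continuousOn.add h₂.continuousOn)
  obtain ⟨x, hx, hx_ne⟩ := hne
  exact hx_ne <| sub_eq_zero.1 <| (h₁.sub h₂).eqOn_zero_of_eqOn_Icc hp hlt hsub
    (fun z hz => sub_eq_zero.2 (heq hz)) hx

/-- Moore–Nehari comparison for Painlevé I: if `y₁, y₂` strictly dominate a
third solution `y₃` on `(α, β)` (with weak domination at the endpoints),
`[α, β] ⊆ (-∞, 0]`, and `y₁, y₂` are distinct, then the graphs of `y₁` and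
`y₂` intersect at most once in `[α, β]`. -/
theorem painleveI_moore_nehari
    (α β : ℝ) (hαβ : α < β) (hβ : β ≤ 0)
    (y₁ y₁' y₂ y₂' y₃ y₃' : ℝ → ℝ)
    (h₁ : ∀ x ∈ Set.Icc α β,
      HasDerivAt y₁ (y₁' x) x ∧ HasDerivAt y₁' (6 * (y₁ x) ^ 2 - x) x)
    (h₂ : ∀ x ∈ Set.Icc α β,
      HasDerivAt y₂ (y₂' x) x ∧ HasDerivAt y₂' (6 * (y₂ x) ^ 2 - x) x)
    (h₃ : ∀ x ∈ Set.Icc α β,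
      HasDerivAt y₃ (y₃' x) x ∧ HasDerivAt y₃' (6 * (y₃ x) ^ 2 - x) x)
    (hdom : ∀ x ∈ Set.Ioo α β, y₃ x < y₁ x ∧ y₃ x < y₂ x)
    (hendα : y₃ α ≤ y₁ α ∧ y₃ α ≤ y₂ α)
    (hendβ : y₃ β ≤ y₁ β ∧ y₃ β ≤ y₂ β)
    (hne : ∃ x ∈ Set.Icc α β, y₁ x ≠ y₂ x) :
    ∀ s ∈ Set.Icc α β, ∀ t ∈ Set.Icc α β,
      y₁ s = y₂ s → y₁ t = y₂ t → s = t :=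
  painleveI_moore_nehari_general α β y₁ y₁' y₂ y₂' y₃ y₃' h₁ h₂ h₃ hdom hne
end
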